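/- arXiv:quant-ph/0309060 — 3 statements merged into one kernel-verified Lean document; each statement's English description precedes it below -/
import Mathlib

section
/- All elements of a persistent set of nonzero complex numbers have the same magnitude, where a finite nonempty set Γ ⊂ ℂ is persistent iff the cardinality of the set Γ^n of all n-element products of elements from Γ is the same for all n > 0. -/
open Pointwise

/-- `prodPow Γ n` is the set of all products of `n+1` elements of `Γ`
(with repetition), i.e. the "all (n+1)-element products" set `Γ^(n+1)`. -/
def prodPow {M : Type*} [Monoid M] (Γ : Set M) : ℕ → Set M
  | 0 => Γ
  | n + 1 => prodPow Γ n * Γ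

/-- A set is persistent iff it is finite, nonempty, and the number of
distinct `n`-element products is the same for all `n ≥ 1`. -/
def Persistent {M : Type*} [Monoid M] (Γ : Set M) : Prop :=
  Γ.Finite ∧ Γ.Nonempty ∧ ∀ m n : ℕ, (prodPow Γ m).ncard = (prodPow Γ n).ncard

lemma prodPow_finite {Γ : Set ℂ} (h : Γ.Finite) : ∀ n, (prodPow Γ n).Finite
  | 0 => h
  | n + 1 => ((prodPow_finite h n).mul h)

lemma mem_prodPow {Γ : Set ℂ} {a b : ℂ} (ha : a ∈ Γ) (hb : b ∈ Γ) :
    ∀ n k, k ≤ n + 1 → a ^ k * b ^ (n + 1 - k) ∈ prodPow Γ n := by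
  intro n
  induction n with
  | zero =>
    intro k hk
    interval_cases k <;> simp [prodPow, ha, hb]
  | succ n ih =>
    intro k hk
    show _ ∈ prodPow Γ n * Γ
    rcases Nat.lt_or_ge k (n + 2) with h | h
    · have hk' : k ≤ n + 1 := Nat.lt_succ_iff.mp h
      have e : n + 1 + 1 - k = (n + 1 - k) + 1 := by omega
      rw [e, pow_succ, ← mul_assoc]
      exact Set.mul_mem_mul (ih k hk') hb
    · have hk2 : k = n + 2 := le_antisymm hk h
      subst hk2
      have e : a ^ (n + 2) * b ^ (n + 1 + 1 - (n + 2))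
          = (a ^ (n + 1) * b ^ (n + 1 - (n + 1))) * a := by
        simp [pow_succ]
      rw [e]
      exact Set.mul_mem_mul (ih (n + 1) le_rfl) ha

theorem stmt0 (Γ : Set ℂ) (hΓ : Persistent Γ) (h0 : (0 : ℂ) ∉ Γ) :
    ∀ x ∈ Γ, ∀ y ∈ Γ, ‖x‖ = ‖y‖ := by
  obtain ⟨hfin, hne, hcard⟩ := hΓ
  by_contra hcon
  push_neg at hcon
  obtain ⟨x, hx, y, hy, hxy⟩ := hcon
  -- min and max
  obtain ⟨a, haΓ, hamin⟩ := Set.exists_min_image Γ norm hfin hne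
  obtain ⟨b, hbΓ, hbmax⟩ := Set.exists_max_image Γ norm hfin hne
  set m := ‖a‖ with hm
  set M := ‖b‖ with hM
  have hm0 : 0 < m := by
    have : a ≠ 0 := fun h => h0 (h ▸ haΓ)
    exact norm_pos_iff.mpr this
  have hmM : m < M := by
    rcases lt_or_ge m M with h | h
    · exact h
    · exfalso
      have h1 : ‖x‖ = m := le_antisymm (le_trans (hbmax x hx) h) (hamin x hx)
      have h2 : ‖y‖ = m := le_antisymm (le_trans (hbmax y hy) h) (hamin y hy)
      exact hxy (h1.trans h2.symm)
  have hM0 : 0 < M := lt_trans hm0 hmM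
  set N := Γ.ncard with hN
  -- the injective family
  set g : Fin (N + 2) → ℂ := fun k => a ^ (k : ℕ) * b ^ (N + 1 - (k : ℕ)) with hg
  have habs : ∀ k : Fin (N + 2), ‖g k‖ = m ^ (k : ℕ) * M ^ (N + 1 - (k : ℕ)) := by
    intro k; simp [hg, norm_mul, norm_pow, hm, hM]
  have key : ∀ k l : ℕ, k < l → l ≤ N + 1 →
      m ^ l * M ^ (N + 1 - l) < m ^ k * M ^ (N + 1 - k) := by
    intro k l hkl hl
    have hd : 0 < l - k := by omega
    have hpow : m ^ (l - k) < M ^ (l - k) :=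
      pow_lt_pow_left₀ hmM (le_of_lt hm0) (by omega)
    calc m ^ l * M ^ (N + 1 - l)
        = m ^ k * (m ^ (l - k) * M ^ (N + 1 - l)) := by
          rw [← mul_assoc, ← pow_add]; congr 2; omega
      _ < m ^ k * (M ^ (l - k) * M ^ (N + 1 - l)) := by
          apply mul_lt_mul_of_pos_left _ (pow_pos hm0 k)
          exact mul_lt_mul_of_pos_right hpow (pow_pos hM0 _)
      _ = m ^ k * M ^ (N + 1 - k) := by
          rw [← pow_add]; congr 2; omega
  have hginj : Function.Injective g := by
    intro k l hkl
    by_contra hne'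
    have := congrArg norm hkl
    rw [habs k, habs l] at this
    rcases lt_or_gt_of_ne (fun h : (k:ℕ) = (l:ℕ) => hne' (Fin.ext h)) with h | h
    · exact absurd this.symm (ne_of_lt (key _ _ h (by omega)))
    · exact absurd this (ne_of_lt (key _ _ h (by omega)))
  have hsub : Set.range g ⊆ prodPow Γ N := by
    rintro _ ⟨k, rfl⟩
    exact mem_prodPow haΓ hbΓ N k (by omega)
  have hle : (Set.range g).ncard ≤ (prodPow Γ N).ncard :=
    Set.ncard_le_ncard hsub (prodPow_finite hfin N)
  have hrange : (Set.range g).ncard = N + 2 := by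
    rw [← Set.image_univ, Set.ncard_image_of_injective _ hginj, Set.ncard_univ]
    simp
  have hPN : (prodPow Γ N).ncard = N := by
    have := hcard N 0
    simpa [prodPow, hN] using this
  omega
end

section
/- Every persistent set Γ ⊂ ℂ with 0 ∉ Γ can be written as cΓ' where c ≠ 0 and Γ' is a finite persistent subset of the unit circle containing 1 and closed under multiplication. -/
open Pointwise

theorem stmt3 (Γ : Set ℂ) (hΓ : Persistent Γ) (h0 : (0 : ℂ) ∉ Γ) :
    ∃ (c : ℂ) (Γ' : Set ℂ), c ≠ 0 ∧ Γ'.Finite ∧ Persistent Γ' ∧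
      (∀ z ∈ Γ', ‖z‖ = 1) ∧ (1 : ℂ) ∈ Γ' ∧
      (∀ x ∈ Γ', ∀ y ∈ Γ', x * y ∈ Γ') ∧
      Γ = (fun z => c * z) '' Γ' := by
  obtain ⟨hfin, ⟨a, ha⟩, hcard⟩ := hΓ
  have ha0 : a ≠ 0 := fun h => h0 (h ▸ ha)
  set H : Set ℂ := (fun z => a⁻¹ * z) '' Γ with hHdef
  -- Γ*Γ = a • Γ
  have hGG : (fun z => a * z) '' Γ = Γ * Γ := by
    apply Set.eq_of_subset_of_ncard_le
    · rintro _ ⟨x, hx, rfl⟩; exact Set.mul_mem_mul ha hx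
    · have h1 : (Γ * Γ).ncard = Γ.ncard := by
        have := hcard 1 0
        simpa [prodPow] using this
      rw [h1, Set.ncard_image_of_injective _ (mul_right_injective₀ ha0)]
    · exact hfin.mul hfin
  have hHfin : H.Finite := hfin.image _
  have h1H : (1 : ℂ) ∈ H := ⟨a, ha, inv_mul_cancel₀ ha0⟩
  have hmulH : ∀ x ∈ H, ∀ y ∈ H, x * y ∈ H := by
    rintro _ ⟨x, hx, rfl⟩ _ ⟨y, hy, rfl⟩
    have hxy : x * y ∈ Γ * Γ := Set.mul_mem_mul hx hy
    rw [← hGG] at hxy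
    obtain ⟨z, hz, hz'⟩ := hxy
    refine ⟨z, hz, ?_⟩
    show a⁻¹ * z = a⁻¹ * x * (a⁻¹ * y)
    rw [show a⁻¹ * x * (a⁻¹ * y) = a⁻¹ * a⁻¹ * (x * y) by ring, ← hz']
    field_simp
  have hH0 : (0 : ℂ) ∉ H := by
    rintro ⟨x, hx, hx'⟩
    have : x = 0 := by
      field_simp at hx'
      simpa using hx'
    exact h0 (this ▸ hx)
  have hHH : H * H = H := by
    apply Set.Subset.antisymm
    · rintro _ ⟨x, hx, y, hy, rfl⟩
      exact hmulH x hx y hy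
    · intro x hx
      exact ⟨x, hx, 1, h1H, (mul_one x)⟩
  have hpow : ∀ n, prodPow H n = H := by
    intro n
    induction n with
    | zero => rfl
    | succ n ih => rw [prodPow, ih, hHH]
  have habs : ∀ z ∈ H, ‖z‖ = 1 := by
    intro z hz
    have hz0 : z ≠ 0 := fun h => hH0 (h ▸ hz)
    have hp : ∀ n : ℕ, z ^ (n + 1) ∈ H := by
      intro n
      induction n with
      | zero => simpa using hz
      | succ n ih => rw [pow_succ]; exact hmulH _ ih _ hz
    -- find two equal powers
    have : ∃ i ∈ (Set.univ : Set ℕ), ∃ j ∈ (Set.univ : Set ℕ), i ≠ j ∧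
        z ^ (i + 1) = z ^ (j + 1) := by
      apply Set.infinite_univ.exists_ne_map_eq_of_mapsTo (fun n _ => hp n) hHfin
    obtain ⟨i, -, j, -, hij, hzij⟩ := this
    wlog hlt : i < j generalizing i j
    · exact this j i hij.symm hzij.symm (lt_of_le_of_ne (not_lt.mp hlt) hij.symm)
    have hk : z ^ (j - i) = 1 := by
      have h1 : z ^ (i + 1) * z ^ (j - i) = z ^ (i + 1) * 1 := by
        rw [mul_one, ← pow_add]
        rw [hzij]
        congr 1
        omega
      exact mul_left_cancel₀ (pow_ne_zero _ hz0) h1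
    have hk0 : j - i ≠ 0 := by omega
    have : ‖z‖ ^ (j - i) = 1 := by
      rw [← norm_pow, hk, norm_one]
    rcases (pow_eq_one_iff_cases).mp this with h | h | h
    · omega
    · exact h
    · exfalso
      have := norm_nonneg z
      rw [h.1] at this
      norm_num at this
  refine ⟨a, H, ha0, hHfin, ⟨hHfin, ⟨1, h1H⟩, ?_⟩, habs, h1H, hmulH, ?_⟩
  · intro m n; rw [hpow m, hpow n]
  · ext x
    constructor
    · intro hx
      exact ⟨a⁻¹ * x, ⟨x, hx, rfl⟩, by field_simp⟩
    · rintro ⟨_, ⟨y, hy, rfl⟩, rfl⟩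
      show a * (a⁻¹ * y) ∈ Γ
      have : a * (a⁻¹ * y) = y := by field_simp
      rw [this]; exact hy
end

section
/- If Γ' is a finite subset of the unit circle in ℂ containing 1 and closed under multiplication, and c ≠ 0, then cΓ' is persistent. -/
open Pointwise

lemma prodPow_img (Γ' : Set ℂ) (hone : (1 : ℂ) ∈ Γ')
    (hmul : ∀ x ∈ Γ', ∀ y ∈ Γ', x * y ∈ Γ') (c : ℂ) :
    ∀ n, prodPow ((fun z => c * z) '' Γ') n = (fun z => c ^ (n + 1) * z) '' Γ' := by
  intro n
  induction n with
  | zero => simp [prodPow]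
  | succ n ih =>
    show prodPow _ n * _ = _
    rw [ih]
    ext z
    constructor
    · rintro ⟨x, ⟨a, ha, rfl⟩, y, ⟨b, hb, rfl⟩, rfl⟩
      exact ⟨a * b, hmul a ha b hb, by ring⟩
    · rintro ⟨g, hg, rfl⟩
      exact ⟨c ^ (n + 1) * g, ⟨g, hg, rfl⟩, c * 1, ⟨1, hone, rfl⟩, by ring⟩

theorem stmt4 (Γ' : Set ℂ) (hfin : Γ'.Finite)
    (hcirc : ∀ z ∈ Γ', ‖z‖ = 1) (hone : (1 : ℂ) ∈ Γ')
    (hmul : ∀ x ∈ Γ', ∀ y ∈ Γ', x * y ∈ Γ')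
    (c : ℂ) (hc : c ≠ 0) :
    Persistent ((fun z => c * z) '' Γ') := by
  have hcard : ∀ n, (prodPow ((fun z => c * z) '' Γ') n).ncard = Γ'.ncard := by
    intro n
    rw [prodPow_img Γ' hone hmul c n]
    exact Set.ncard_image_of_injective _
      (mul_right_injective₀ (pow_ne_zero _ hc))
  exact ⟨hfin.image _, ⟨c * 1, 1, hone, rfl⟩,
    fun m n => by rw [hcard m, hcard n]⟩
end
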